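/- Let π be a permutation of K experts that, over the course of a dying-experts game, predicts using exactly l distinct experts e_{i_1}, …, e_{i_l} in this order. Then at least (K − l)! permutations of the K experts have identical behavior to π throughout the game; hence the fraction of permutations behaving like π is at least ∏_{r=0}^{l−1} 1/(K − r). -/

import Mathlib

/-!
Every expert predicted by `π` is the first alive expert of `π`, and alive sets only shrink, so
the distinct predictions `L = [e₁, …, e_l]` appear in increasing `π`-rank. If `π'` ranks
`e₁, …, e_l` first, in this order, then at any round the prediction `e_j` of `π` is alive while
`e₁, …, e_{j-1}` rank below it in `π` and are therefore dead; hence `π'` predicts `e_j` too.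
The permutations with a prescribed prefix of length `l` form a coset of the pointwise stabiliser
of `l` points, of size `(K - l)!`, and `(K - l)! / K! = ∏_{r<l} 1/(K - r)`.
-/

open Finset

theorem Equiv.Perm.card_filter_forall_mem_apply_eq {α : Type*} [Fintype α] [DecidableEq α]
    (σ : Equiv.Perm α) (s : Finset α) :
    #{π : Equiv.Perm α | ∀ j ∈ s, π j = σ j} = (Fintype.card α - #s).factorial := by
  let fixing : {π : Equiv.Perm α // ∀ j ∈ s, π j = σ j} ≃
      {τ : Equiv.Perm α // ∀ j, ¬j ∉ s → τ j = j} :=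
    (Equiv.mulLeft σ⁻¹).subtypeEquiv fun π => by
      simp [Equiv.eq_symm_apply, eq_comm]
  rw [← Fintype.card_subtype, Fintype.card_congr
    (fixing.trans (Equiv.Perm.subtypeEquivSubtypePerm (· ∉ s)).symm),
    Fintype.card_perm, Fintype.card_subtype_compl, Fintype.card_coe]

theorem prod_range_one_div_natCast_sub {K l : ℕ} (hlK : l ≤ K) :
    ∏ r ∈ range l, (1 : ℝ) / ((K : ℝ) - r) = (K - l).factorial / K.factorial := by
  have hdesc : ∏ r ∈ range l, ((K : ℝ) - r) = K.descFactorial l := by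
    rw [Nat.descFactorial_eq_prod_range, Nat.cast_prod]
    refine prod_congr rfl fun r hr => ?_
    rw [Nat.cast_sub (by grind)]
  have hpos : ((K - l).factorial : ℝ) ≠ 0 := by positivity
  rw [prod_div_distrib, prod_const_one, hdesc, ← Nat.factorial_mul_descFactorial hlK,
    Nat.cast_mul, div_mul_cancel_left₀ hpos, one_div]

/-- `π` ranks the experts as `π 0, π 1, …`, so `π.symm e` is the rank of `e`. -/
def IsFirstAlive {K : ℕ} (π : Equiv.Perm (Fin K)) (A : Finset (Fin K)) (e : Fin K) : Prop :=
  e ∈ A ∧ ∀ e' ∈ A, π.symm e ≤ π.symm e'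

namespace IsFirstAlive

variable {K : ℕ} {π : Equiv.Perm (Fin K)} {A : Finset (Fin K)}

theorem unique {e e' : Fin K} (h : IsFirstAlive π A e) (h' : IsFirstAlive π A e') : e = e' :=
  π.symm.injective (le_antisymm (h.2 e' h'.1) (h'.2 e h.1))

theorem of_prefix {π' : Equiv.Perm (Fin K)} {L : List (Fin K)}
    (hL : L.Pairwise (fun x y => π.symm x < π.symm y))
    (hprefix : ∀ i : Fin L.length, (π'.symm (L.get i) : ℕ) = i)
    {e : Fin K} (he : IsFirstAlive π A e) (heL : e ∈ L) : IsFirstAlive π' A e := by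
  obtain ⟨j, rfl⟩ := List.mem_iff_get.1 heL
  refine ⟨he.1, fun e' he' => ?_⟩
  by_contra! hlt
  let i : Fin L.length := ⟨π'.symm e', by grind⟩
  have hi : L.get i = e' := π'.symm.injective (Fin.ext (hprefix i))
  have hij : i < j := by grind
  exact (List.pairwise_iff_get.1 hL i j hij).not_ge (hi ▸ he.2 e' he')

end IsFirstAlive

theorem pairwise_lt_dedup_of_isFirstAlive {K T : ℕ} {alive : Fin T → Finset (Fin K)}
    (hmono : Antitone alive) {π : Equiv.Perm (Fin K)} {b : Fin T → Fin K}
    (hb : ∀ t, IsFirstAlive π (alive t) (b t)) :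
    ((List.finRange T).map b).dedup.Pairwise (fun x y => π.symm x < π.symm y) := by
  have hle : ((List.finRange T).map b).Pairwise (fun x y => π.symm x ≤ π.symm y) :=
    (List.pairwise_lt_finRange T).map _ fun s t hst =>
      (hb s).2 (b t) (hmono hst.le (hb t).1)
  exact ((hle.sublist (List.dedup_sublist _)).and (List.nodup_dedup _)).imp
    fun h => lt_of_le_of_ne h.1 (π.symm.injective.ne h.2)

theorem behavior_eq_of_prefix {K T : ℕ} {alive : Fin T → Finset (Fin K)} (hmono : Antitone alive)
    {beh : Equiv.Perm (Fin K) → Fin T → Fin K} (hbeh : ∀ π t, IsFirstAlive π (alive t) (beh π t))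
    {π π' : Equiv.Perm (Fin K)}
    (hprefix : ∀ i : Fin ((List.finRange T).map (beh π)).dedup.length,
      (π'.symm (((List.finRange T).map (beh π)).dedup.get i) : ℕ) = i)
    (t : Fin T) : beh π' t = beh π t :=
  (hbeh π' t).unique <| (hbeh π t).of_prefix (pairwise_lt_dedup_of_isFirstAlive hmono (hbeh π))
    hprefix (List.mem_dedup.2 (List.mem_map_of_mem (List.mem_finRange t)))

theorem behavioral_copies_general (K T : ℕ)
    (alive : Fin T → Finset (Fin K))
    (hmono : ∀ s t : Fin T, s ≤ t → alive t ⊆ alive s)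
    (beh : Equiv.Perm (Fin K) → Fin T → Fin K)
    (hbeh : ∀ π t, beh π t ∈ alive t ∧
      ∀ e ∈ alive t, π.symm (beh π t) ≤ π.symm e)
    (π : Equiv.Perm (Fin K)) (l : ℕ)
    (hl : (((List.finRange T).map (beh π)).dedup).length = l) :
    (K - l).factorial
        ≤ (Finset.univ.filter
            (fun π' : Equiv.Perm (Fin K) => ∀ t, beh π' t = beh π t)).card ∧
    (∏ r ∈ Finset.range l, (1 : ℝ) / ((K : ℝ) - r))
        ≤ ((Finset.univ.filter
            (fun π' : Equiv.Perm (Fin K) => ∀ t, beh π' t = beh π t)).card : ℝ)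
          / (K.factorial : ℝ) := by
  set L := ((List.finRange T).map (beh π)).dedup
  have hlK : l ≤ K := hl ▸ by simpa using (List.nodup_dedup _).length_le_card (l := L)
  subst hl
  obtain ⟨σ, hσ⟩ := Equiv.Perm.exists_extending_pair (Fin.castLE hlK) L.get
    (Fin.castLE_injective hlK) (List.nodup_dedup _).injective_get
  have hcopies : (K - L.length).factorial ≤ #{π' | ∀ t, beh π' t = beh π t} :=
    calc (K - L.length).factorial
        = (Fintype.card (Fin K) - #(univ.map (Fin.castLEEmb hlK))).factorial := by simp
      _ = #{π' : Equiv.Perm (Fin K) | ∀ j ∈ univ.map (Fin.castLEEmb hlK), π' j = σ j} := by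
        -- the two filters carry different (but equal) `Decidable` instances
        convert (Equiv.Perm.card_filter_forall_mem_apply_eq σ _).symm
      _ ≤ _ := card_le_card fun π' hπ' => by
        refine mem_filter.2 ⟨mem_univ π', behavior_eq_of_prefix hmono hbeh fun i => ?_⟩
        rw [← hσ i, ← (mem_filter.1 hπ').2 (Fin.castLE hlK i) (by simp), Equiv.symm_apply_apply]
        rfl
  refine ⟨hcopies, ?_⟩
  rw [prod_range_one_div_natCast_sub hlK]
  gcongr

/-- **Behavioral copies of a permutation.**  In a dying experts game (`alive`
is antitone and nonempty; `beh π t` is the first alive expert of `π` at round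
`t`), if the prediction sequence of a permutation `π` uses exactly `l` distinct
experts, then at least `(K - l)!` permutations have identical behavior to `π`,
and hence the fraction of such permutations is at least
`∏_{r=0}^{l-1} 1/(K - r)`. -/
theorem behavioral_copies (K T : ℕ) (hK : 0 < K)
    (alive : Fin T → Finset (Fin K))
    (hne : ∀ t, (alive t).Nonempty)
    (hmono : ∀ s t : Fin T, s ≤ t → alive t ⊆ alive s)
    (beh : Equiv.Perm (Fin K) → Fin T → Fin K)
    (hbeh : ∀ π t, beh π t ∈ alive t ∧
      ∀ e ∈ alive t, π.symm (beh π t) ≤ π.symm e)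
    (π : Equiv.Perm (Fin K)) (l : ℕ)
    (hl : (((List.finRange T).map (beh π)).dedup).length = l) :
    (K - l).factorial
        ≤ (Finset.univ.filter
            (fun π' : Equiv.Perm (Fin K) => ∀ t, beh π' t = beh π t)).card ∧
    (∏ r ∈ Finset.range l, (1 : ℝ) / ((K : ℝ) - r))
        ≤ ((Finset.univ.filter
            (fun π' : Equiv.Perm (Fin K) => ∀ t, beh π' t = beh π t)).card : ℝ)
          / (K.factorial : ℝ) :=
  behavioral_copies_general K T alive hmono beh hbeh π l hl
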